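/- (Equation (44): fully broad beam.) Let N, M ≥ 1, let (u, v) be a Golay complementary pair of unimodular sequences of length N, and let (w_PA, w_PB) be a Golay complementary pair of unimodular sequences of length M. Define sequences w_A, w_B of length 2NM by: for 0 ≤ l ≤ N−1 and 0 ≤ m ≤ M−1, w_A(lM+m) = u(l)·w_PA(m), w_A(NM+lM+m) = −v(l)·conj(w_PB(M−1−m)), w_B(lM+m) = u(l)·w_PB(m), w_B(NM+lM+m) = v(l)·conj(w_PA(M−1−m)). Then for every ψ ∈ ℝ, |F_{w_A}(ψ)|² + |F_{w_B}(ψ)|² = 4NM; i.e. the expanded array's sum power-domain array factor is spatially flat. -/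

import Mathlib

/-- The array factor of a length-`M` sequence `u` at spatial frequency `ψ`:
`F_u(ψ) = Σ_{m=0}^{M-1} u(m) · exp(i·m·ψ)`. -/
noncomputable def arrayFactor (M : ℕ) (u : ℕ → ℂ) (ψ : ℝ) : ℂ :=
  ∑ m ∈ Finset.range M, u m * Complex.exp (Complex.I * (m : ℂ) * (ψ : ℂ))

/-- The aperiodic autocorrelation of a length-`M` sequence `u` at shift `τ`:
`R_u(τ) = Σ_{m=0}^{M-1-τ} u(m) · conj(u(m+τ))`. -/
noncomputable def aacf (M : ℕ) (u : ℕ → ℂ) (τ : ℕ) : ℂ :=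
  ∑ m ∈ Finset.range (M - τ), u m * (starRingEnd ℂ) (u (m + τ))

/-!
Each half of the expanded array is a Kronecker product of an expander with a protoarray
sequence, and the conjugate reversal of a sequence has array factor `e^{i(M-1)ψ} conj F`. Hence
`F_{w_A}(ψ) = a x - b conj y` and `F_{w_B}(ψ) = a y + b conj x` with `a = F_u(Mψ)`,
`b = e^{i(NM+M-1)ψ} F_v(Mψ)`, `x = F_{w_PA}(ψ)`, `y = F_{w_PB}(ψ)`. This Alamouti-type combination
satisfies `|F_{w_A}|² + |F_{w_B}|² = (|a|² + |b|²)(|x|² + |y|²)`, and both factors are flat by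
the classical fact `|F_u(ψ)|² = Σ_{|τ|<N} R_u(τ) e^{-iτψ}` (with `R_u(-τ) = conj R_u(τ)`), whose
nonzero lags cancel across a Golay pair: `|F_u|² + |F_v|² = 2 R(0) = 2N`.
-/

open Finset Complex ComplexConjugate

theorem Finset.sum_range_mul_eq_sum_sum {β : Type*} [AddCommMonoid β] (N M : ℕ) (f : ℕ → β) :
    ∑ k ∈ range (N * M), f k = ∑ l ∈ range N, ∑ m ∈ range M, f (l * M + m) := by
  induction N with
  | zero => simp
  | succ N ih => rw [Nat.succ_mul, sum_range_add, ih, sum_range_succ]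

theorem Finset.sum_range_sum_range_eq_triangles {β : Type*} [AddCommGroup β] (N : ℕ)
    (g : ℕ → ℕ → β) :
    ∑ m ∈ range N, ∑ n ∈ range N, g m n =
      ∑ n ∈ range N, ∑ m ∈ range (n + 1), g m n + ∑ m ∈ range N, ∑ n ∈ range (m + 1), g m n
        - ∑ n ∈ range N, g n n := by
  induction N with
  | zero => simp
  | succ N ih =>
    simp only [sum_range_succ, sum_add_distrib, ih]
    abel

theorem Finset.sum_range_triangle_eq_sum_lag {β : Type*} [AddCommMonoid β] (N : ℕ)
    (g : ℕ → ℕ → β) :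
    ∑ n ∈ range N, ∑ m ∈ range (n + 1), g m n =
      ∑ τ ∈ range N, ∑ m ∈ range (N - τ), g m (m + τ) := by
  rw [← sum_range_diag_flip]
  refine sum_congr rfl fun n _ => ?_
  rw [← sum_range_reflect]
  refine sum_congr rfl fun k hk => ?_
  rw [mem_range] at hk
  congr 1; omega

noncomputable def aacfTransform (N : ℕ) (u : ℕ → ℂ) (ψ : ℝ) : ℂ :=
  ∑ τ ∈ range N, aacf N u τ * conj (exp (I * τ * ψ))

structure IsGolayPair (N : ℕ) (u v : ℕ → ℂ) : Prop where
  norm_left : ∀ l < N, ‖u l‖ = 1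
  norm_right : ∀ l < N, ‖v l‖ = 1
  aacf_add : ∀ τ, 1 ≤ τ → τ < N → aacf N u τ + aacf N v τ = 0

section ArrayFactor

variable {N M : ℕ}

theorem norm_exp_I_mul_natCast_mul (n : ℕ) (ψ : ℝ) : ‖exp (I * n * ψ)‖ = 1 := by
  rw [show I * n * ψ = ((n * ψ : ℝ) : ℂ) * I by push_cast; ring]
  exact norm_exp_ofReal_mul_I _

theorem exp_I_mul_natCast_add_mul (m n : ℕ) (ψ : ℝ) :
    exp (I * ↑(m + n) * ψ) = exp (I * m * ψ) * exp (I * n * ψ) := by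
  rw [← exp_add]; push_cast; ring_nf

theorem exp_I_mul_natCast_mul_conj (n : ℕ) (ψ : ℝ) :
    exp (I * n * ψ) * conj (exp (I * n * ψ)) = 1 := by
  rw [mul_conj', norm_exp_I_mul_natCast_mul]; norm_num

theorem aacf_zero_of_norm_eq_one {u : ℕ → ℂ} (hu : ∀ l < N, ‖u l‖ = 1) : aacf N u 0 = N := by
  calc aacf N u 0 = ∑ _m ∈ range N, (1 : ℂ) := by
        refine sum_congr (by rw [Nat.sub_zero]) fun m hm => ?_
        rw [add_zero, mul_conj', hu m (mem_range.mp hm)]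
        norm_num
    _ = N := by simp

theorem arrayFactor_mul_conj (u : ℕ → ℂ) (ψ : ℝ) :
    arrayFactor N u ψ * conj (arrayFactor N u ψ) =
      aacfTransform N u ψ + conj (aacfTransform N u ψ) - aacf N u 0 := by
  set e : ℕ → ℂ := fun m => exp (I * m * ψ)
  have he : ∀ m, e m * conj (e m) = 1 := fun m => exp_I_mul_natCast_mul_conj m ψ
  have hS : aacfTransform N u ψ =
      ∑ n ∈ range N, ∑ m ∈ range (n + 1), u m * e m * conj (u n * e n) := by
    rw [aacfTransform, sum_range_triangle_eq_sum_lag]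
    refine sum_congr rfl fun τ _ => ?_
    rw [aacf, sum_mul]
    refine sum_congr rfl fun m _ => ?_
    simp only [e, exp_I_mul_natCast_add_mul, map_mul]
    linear_combination (-(u m * conj (u (m + τ)) * conj (e τ))) * he m
  have hdiag : aacf N u 0 = ∑ n ∈ range N, u n * e n * conj (u n * e n) := by
    refine sum_congr (by rw [Nat.sub_zero]) fun n _ => ?_
    rw [add_zero, map_mul]
    linear_combination (-(u n * conj (u n))) * he n
  have hF : arrayFactor N u ψ = ∑ m ∈ range N, u m * e m := rfl
  rw [hS, hdiag, hF, map_sum, sum_mul_sum, sum_range_sum_range_eq_triangles]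
  simp only [map_sum, map_mul, conj_conj]
  congr 2
  exact sum_congr rfl fun _ _ => sum_congr rfl fun _ _ => by ring

theorem IsGolayPair.aacfTransform_add {u v : ℕ → ℂ} (h : IsGolayPair N u v) (ψ : ℝ) :
    aacfTransform N u ψ + aacfTransform N v ψ = 2 * N := by
  have hcorr : aacfTransform N u ψ + aacfTransform N v ψ = aacf N u 0 + aacf N v 0 := by
    rw [aacfTransform, aacfTransform, ← sum_add_distrib, sum_eq_single 0]
    · simp
    · intro τ hτ hτ0
      rw [← add_mul, h.aacf_add τ (Nat.one_le_iff_ne_zero.mpr hτ0) (mem_range.mp hτ), zero_mul]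
    · intro hN
      obtain rfl : N = 0 := by simpa using hN
      simp [aacf]
  rw [hcorr, aacf_zero_of_norm_eq_one h.norm_left, aacf_zero_of_norm_eq_one h.norm_right]
  ring

theorem IsGolayPair.norm_sq_add_norm_sq {u v : ℕ → ℂ} (h : IsGolayPair N u v) (ψ : ℝ) :
    ‖arrayFactor N u ψ‖ ^ 2 + ‖arrayFactor N v ψ‖ ^ 2 = 2 * N := by
  have hC := h.aacfTransform_add ψ
  have hC' : conj (aacfTransform N u ψ) + conj (aacfTransform N v ψ) = 2 * N := by
    rw [← map_add, hC, map_mul, map_natCast, map_ofNat]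
  apply ofReal_injective
  push_cast
  rw [← mul_conj', ← mul_conj', arrayFactor_mul_conj, arrayFactor_mul_conj,
    aacf_zero_of_norm_eq_one h.norm_left, aacf_zero_of_norm_eq_one h.norm_right]
  linear_combination hC + hC'

theorem arrayFactor_add_length (K L : ℕ) (w : ℕ → ℂ) (ψ : ℝ) :
    arrayFactor (K + L) w ψ =
      arrayFactor K w ψ + exp (I * K * ψ) * arrayFactor L (fun k => w (K + k)) ψ := by
  rw [arrayFactor, sum_range_add, arrayFactor, arrayFactor, mul_sum]
  congr 1
  refine sum_congr rfl fun k _ => ?_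
  rw [exp_I_mul_natCast_add_mul]
  ring

theorem arrayFactor_mul_length {w a b : ℕ → ℂ} (h : ∀ l < N, ∀ m < M, w (l * M + m) = a l * b m)
    (ψ : ℝ) : arrayFactor (N * M) w ψ = arrayFactor N a (M * ψ) * arrayFactor M b ψ := by
  rw [arrayFactor, sum_range_mul_eq_sum_sum, arrayFactor, arrayFactor, sum_mul_sum]
  refine sum_congr rfl fun l hl => sum_congr rfl fun m hm => ?_
  rw [h l (mem_range.mp hl) m (mem_range.mp hm), exp_I_mul_natCast_add_mul,
    show I * ↑(l * M) * ψ = I * l * ↑(M * ψ : ℝ) by push_cast; ring]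
  ring

theorem arrayFactor_neg (u : ℕ → ℂ) (ψ : ℝ) :
    arrayFactor N (fun l => -u l) ψ = -arrayFactor N u ψ := by
  simp only [arrayFactor, neg_mul, sum_neg_distrib]

theorem arrayFactor_conj_reverse (b : ℕ → ℂ) (ψ : ℝ) :
    arrayFactor M (fun m => conj (b (M - 1 - m))) ψ =
      exp (I * ↑(M - 1) * ψ) * conj (arrayFactor M b ψ) := by
  rw [arrayFactor, ← sum_range_reflect, arrayFactor, map_sum, mul_sum]
  refine sum_congr rfl fun m hm => ?_
  have hm : m < M := mem_range.mp hm
  have hexp : exp (I * ↑(M - 1) * ψ) = exp (I * ↑(M - 1 - m) * ψ) * exp (I * m * ψ) := by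
    rw [← exp_I_mul_natCast_add_mul, Nat.sub_add_cancel (by omega)]
  rw [Nat.sub_sub_self (by omega), hexp, map_mul]
  linear_combination (-(conj (b m) * exp (I * ↑(M - 1 - m) * ψ))) *
    exp_I_mul_natCast_mul_conj m ψ

theorem arrayFactor_of_expansion {w a b c d : ℕ → ℂ}
    (hfirst : ∀ l < N, ∀ m < M, w (l * M + m) = a l * b m)
    (hsecond : ∀ l < N, ∀ m < M, w (N * M + l * M + m) = c l * d m) (ψ : ℝ) :
    arrayFactor (2 * N * M) w ψ = arrayFactor N a (M * ψ) * arrayFactor M b ψ +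
      exp (I * ↑(N * M) * ψ) * (arrayFactor N c (M * ψ) * arrayFactor M d ψ) := by
  rw [mul_assoc, two_mul, arrayFactor_add_length, arrayFactor_mul_length hfirst,
    arrayFactor_mul_length (w := fun k => w (N * M + k))
      fun l hl m hm => by rw [← add_assoc]; exact hsecond l hl m hm]

end ArrayFactor

theorem norm_sq_add_norm_sq_alamouti (a b x y : ℂ) :
    ‖a * x - b * conj y‖ ^ 2 + ‖a * y + b * conj x‖ ^ 2 =
      (‖a‖ ^ 2 + ‖b‖ ^ 2) * (‖x‖ ^ 2 + ‖y‖ ^ 2) := by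
  simp only [← normSq_eq_norm_sq, normSq_apply, sub_re, sub_im, add_re, add_im, mul_re, mul_im,
    conj_re, conj_im]
  ring

theorem golay_expansion_fully_broad_general (N M : ℕ)
    (u v wPA wPB wA wB : ℕ → ℂ)
    (hu : ∀ l < N, ‖u l‖ = 1) (hv : ∀ l < N, ‖v l‖ = 1)
    (hGolayuv : ∀ τ, 1 ≤ τ → τ < N → aacf N u τ + aacf N v τ = 0)
    (hwPA : ∀ m < M, ‖wPA m‖ = 1)
    (hwPB : ∀ m < M, ‖wPB m‖ = 1)
    (hGolayP : ∀ τ, 1 ≤ τ → τ < M → aacf M wPA τ + aacf M wPB τ = 0)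
    (hA1 : ∀ l < N, ∀ m < M, wA (l * M + m) = u l * wPA m)
    (hA2 : ∀ l < N, ∀ m < M,
      wA (N * M + l * M + m) = -(v l * (starRingEnd ℂ) (wPB (M - 1 - m))))
    (hB1 : ∀ l < N, ∀ m < M, wB (l * M + m) = u l * wPB m)
    (hB2 : ∀ l < N, ∀ m < M,
      wB (N * M + l * M + m) = v l * (starRingEnd ℂ) (wPA (M - 1 - m)))
    (ψ : ℝ) :
    ‖arrayFactor (2 * N * M) wA ψ‖ ^ 2 +
        ‖arrayFactor (2 * N * M) wB ψ‖ ^ 2 = 4 * N * M := by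
  set a := arrayFactor N u (M * ψ)
  set b := exp (I * ↑(N * M) * ψ) * exp (I * ↑(M - 1) * ψ) * arrayFactor N v (M * ψ)
  set x := arrayFactor M wPA ψ
  set y := arrayFactor M wPB ψ
  have hA : arrayFactor (2 * N * M) wA ψ = a * x - b * conj y := by
    rw [arrayFactor_of_expansion hA1 (c := fun l => -v l) (d := fun m => conj (wPB (M - 1 - m)))
      fun l hl m hm => by rw [hA2 l hl m hm]; ring, arrayFactor_neg, arrayFactor_conj_reverse]
    ring
  have hB : arrayFactor (2 * N * M) wB ψ = a * y + b * conj x := by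
    rw [arrayFactor_of_expansion hB1 hB2, arrayFactor_conj_reverse]
    ring
  have hb : ‖b‖ = ‖arrayFactor N v (M * ψ)‖ := by
    simp only [b, norm_mul, norm_exp_I_mul_natCast_mul, one_mul]
  rw [hA, hB, norm_sq_add_norm_sq_alamouti, hb,
    IsGolayPair.norm_sq_add_norm_sq ⟨hu, hv, hGolayuv⟩,
    IsGolayPair.norm_sq_add_norm_sq ⟨hwPA, hwPB, hGolayP⟩]
  ring

/-- Equation (44): if both the expanders and the protoarray weights are Golay
complementary pairs, the expanded array's sum power-domain array factor is flat. -/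
theorem golay_expansion_fully_broad (N M : ℕ) (hN : 1 ≤ N) (hM : 1 ≤ M)
    (u v wPA wPB wA wB : ℕ → ℂ)
    (hu : ∀ l < N, ‖u l‖ = 1) (hv : ∀ l < N, ‖v l‖ = 1)
    (hGolayuv : ∀ τ, 1 ≤ τ → τ < N → aacf N u τ + aacf N v τ = 0)
    (hwPA : ∀ m < M, ‖wPA m‖ = 1)
    (hwPB : ∀ m < M, ‖wPB m‖ = 1)
    (hGolayP : ∀ τ, 1 ≤ τ → τ < M → aacf M wPA τ + aacf M wPB τ = 0)
    (hA1 : ∀ l < N, ∀ m < M, wA (l * M + m) = u l * wPA m)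
    (hA2 : ∀ l < N, ∀ m < M,
      wA (N * M + l * M + m) = -(v l * (starRingEnd ℂ) (wPB (M - 1 - m))))
    (hB1 : ∀ l < N, ∀ m < M, wB (l * M + m) = u l * wPB m)
    (hB2 : ∀ l < N, ∀ m < M,
      wB (N * M + l * M + m) = v l * (starRingEnd ℂ) (wPA (M - 1 - m)))
    (ψ : ℝ) :
    ‖arrayFactor (2 * N * M) wA ψ‖ ^ 2 +
        ‖arrayFactor (2 * N * M) wB ψ‖ ^ 2 = 4 * N * M :=
  golay_expansion_fully_broad_general N M u v wPA wPB wA wB hu hv hGolayuv hwPA hwPB hGolayP hA1 hA2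
    hB1 hB2 ψ
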